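/- In the restricted Jordan plane B(V) = k⟨x,y⟩/(x^p, y^p, yx − xy + (1/2)x²) over a field of characteristic p > 2, the family (x^i y^j)_{0 ≤ i,j ≤ p−1} is a linear basis; in particular dim B(V) = p². -/

import Mathlib

/-- Defining relations of the restricted Jordan plane
`B(V) = k⟨x,y⟩/(x^p, y^p, yx - xy + (1/2)x²)`, with `x = ι 0`, `y = ι 1`. -/
inductive JRel (K : Type*) [Field K] (p : ℕ) :
    FreeAlgebra K (Fin 2) → FreeAlgebra K (Fin 2) → Prop
  | xp : JRel K p ((FreeAlgebra.ι K (0 : Fin 2)) ^ p) 0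
  | yp : JRel K p ((FreeAlgebra.ι K (1 : Fin 2)) ^ p) 0
  | comm : JRel K p (FreeAlgebra.ι K (1 : Fin 2) * FreeAlgebra.ι K (0 : Fin 2))
      (FreeAlgebra.ι K (0 : Fin 2) * FreeAlgebra.ι K (1 : Fin 2)
        - (1/2 : K) • (FreeAlgebra.ι K (0 : Fin 2)) ^ 2)

/-!
The monomials `x^i y^j` with `i, j < p` span: their span contains `1` and is stable under left
multiplication by `x` and `y`, because `x^p = y^p = 0` and `y x^i = x^i y - (i/2) x^(i+1)`.
They are linearly independent because the algebra acts on functions `ℕ × ℕ → K`, read as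
coefficients on a basis `e (a, b)` indexed like `x^a y^b`: `x` acts as the truncated shift
`e (a, b) ↦ e (a + 1, b)` and `y` as left multiplication by `y` in that basis. The operator of `y`
is a sum of two commuting operators that are nilpotent of order `p`, so its `p`-th power vanishes in
characteristic `p`, and `x^i y^j` maps `e (0, 0)` to `e (i, j)`.
-/

section

variable {K A : Type*} [Field K] [Ring A] [Algebra K A]

theorem Submodule.span_eq_top_of_mul_mem {s t : Set A} (hs : Algebra.adjoin K s = ⊤)
    (h1 : 1 ∈ span K t) (hmul : ∀ a ∈ s, ∀ b ∈ t, a * b ∈ span K t) : span K t = ⊤ := by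
  have hgen (a : A) (ha : a ∈ s) : span K t ≤ (span K t).comap (LinearMap.mulLeft K a) :=
    span_le.mpr fun b hb => hmul a ha b hb
  refine eq_top_iff'.mpr fun a => ?_
  suffices key : ∀ m ∈ span K t, a * m ∈ span K t by simpa using key 1 h1
  have ha : a ∈ Algebra.adjoin K s := hs ▸ Algebra.mem_top
  induction ha using Algebra.adjoin_induction with
  | mem a ha => exact hgen a ha
  | algebraMap r => exact fun m hm => by simpa [Algebra.smul_def] using smul_mem _ r hm
  | add a b _ _ ha hb => exact fun m hm => add_mul a b m ▸ add_mem (ha m hm) (hb m hm)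
  | mul a b _ _ ha hb => exact fun m hm => mul_assoc a b m ▸ ha _ (hb m hm)

end

namespace RestrictedJordanPlane

section Spanning

variable {K A : Type*} [Field K] [Ring A] [Algebra K A] {x y : A}

theorem mul_pow_of_jordan (hyx : y * x = x * y - (1 / 2 : K) • x ^ 2) (i : ℕ) :
    y * x ^ i = x ^ i * y - ((i : K) / 2) • x ^ (i + 1) := by
  induction i with
  | zero => simp
  | succ i ih =>
    calc y * x ^ (i + 1) = (y * x ^ i) * x := by rw [mul_assoc, ← pow_succ]
      _ = x ^ i * (y * x) - ((i : K) / 2) • x ^ (i + 2) := by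
        rw [ih, sub_mul, smul_mul_assoc, mul_assoc, ← pow_succ]
      _ = x ^ (i + 1) * y - (((i + 1 : ℕ) : K) / 2) • x ^ (i + 2) := by
        rw [hyx, mul_sub, mul_smul_comm, ← mul_assoc, ← pow_succ, ← pow_add, sub_sub,
          ← add_smul]
        module

variable (K) in
theorem pow_mul_pow_mem_span {p : ℕ} (hx : x ^ p = 0) (hy : y ^ p = 0) (i j : ℕ) :
    x ^ i * y ^ j ∈
      Submodule.span K (Set.range fun ij : Fin p × Fin p => x ^ (ij.1 : ℕ) * y ^ (ij.2 : ℕ)) := by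
  by_cases hij : i < p ∧ j < p
  · exact Submodule.subset_span ⟨(⟨i, hij.1⟩, ⟨j, hij.2⟩), rfl⟩
  · rcases not_and_or.mp hij with hi | hj
    · simp [pow_eq_zero_of_le (not_lt.mp hi) hx]
    · simp [pow_eq_zero_of_le (not_lt.mp hj) hy]

theorem span_pow_mul_pow_eq_top {p : ℕ} (hx : x ^ p = 0) (hy : y ^ p = 0)
    (hyx : y * x = x * y - (1 / 2 : K) • x ^ 2) (hgen : Algebra.adjoin K {x, y} = ⊤) :
    Submodule.span K (Set.range fun ij : Fin p × Fin p => x ^ (ij.1 : ℕ) * y ^ (ij.2 : ℕ)) = ⊤ := by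
  refine Submodule.span_eq_top_of_mul_mem hgen (by simpa using pow_mul_pow_mem_span K hx hy 0 0) ?_
  rintro a (rfl | rfl) _ ⟨⟨i, j⟩, rfl⟩
  · rw [← mul_assoc, ← pow_succ']
    exact pow_mul_pow_mem_span K hx hy _ _
  · rw [← mul_assoc, mul_pow_of_jordan hyx, sub_mul, mul_assoc, ← pow_succ', smul_mul_assoc]
    exact Submodule.sub_mem _ (pow_mul_pow_mem_span K hx hy _ _)
      (Submodule.smul_mem _ _ (pow_mul_pow_mem_span K hx hy _ _))

end Spanning

section Operators

variable (K : Type*) [Field K] (p : ℕ)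

def shiftFst (w : ℕ → K) : Module.End K (ℕ × ℕ → K) :=
  LinearMap.pi fun v => if 0 < v.1 ∧ v.1 < p then w v.1 • LinearMap.proj (v.1 - 1, v.2) else 0

def shiftSnd : Module.End K (ℕ × ℕ → K) :=
  LinearMap.pi fun v => if 0 < v.2 ∧ v.2 < p then LinearMap.proj (v.1, v.2 - 1) else 0

variable {K p}

theorem shiftFst_apply (w : ℕ → K) (f : ℕ × ℕ → K) (a b : ℕ) :
    shiftFst K p w f (a, b) = if 0 < a ∧ a < p then w a * f (a - 1, b) else 0 := by
  simp only [shiftFst, LinearMap.pi_apply]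
  split_ifs <;> rfl

theorem shiftSnd_apply (f : ℕ × ℕ → K) (a b : ℕ) :
    shiftSnd K p f (a, b) = if 0 < b ∧ b < p then f (a, b - 1) else 0 := by
  simp only [shiftSnd, LinearMap.pi_apply]
  split_ifs <;> rfl

theorem shiftFst_pow_apply_eq_zero (w : ℕ → K) {m a : ℕ} (h : a < m ∨ 0 < m ∧ p ≤ a)
    (f : ℕ × ℕ → K) (b : ℕ) : (shiftFst K p w ^ m) f (a, b) = 0 := by
  induction m generalizing a with
  | zero => omega
  | succ m ih =>
    rw [pow_succ', Module.End.mul_apply, shiftFst_apply]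
    split_ifs
    · rw [ih (by omega), mul_zero]
    · rfl

theorem shiftSnd_pow_apply_eq_zero {m b : ℕ} (h : b < m ∨ 0 < m ∧ p ≤ b)
    (f : ℕ × ℕ → K) (a : ℕ) : (shiftSnd K p ^ m) f (a, b) = 0 := by
  induction m generalizing b with
  | zero => omega
  | succ m ih =>
    rw [pow_succ', Module.End.mul_apply, shiftSnd_apply]
    split_ifs
    · exact ih (by omega)
    · rfl

theorem shiftFst_pow_self (hp : 0 < p) (w : ℕ → K) : shiftFst K p w ^ p = 0 := by
  ext f ⟨a, b⟩
  exact shiftFst_pow_apply_eq_zero w (by omega) f b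

theorem shiftSnd_pow_self (hp : 0 < p) : shiftSnd K p ^ p = 0 := by
  ext f ⟨a, b⟩
  exact shiftSnd_pow_apply_eq_zero (by omega) f a

theorem commute_shiftSnd_shiftFst (w : ℕ → K) : Commute (shiftSnd K p) (shiftFst K p w) := by
  ext f ⟨a, b⟩
  simp only [Module.End.mul_apply, shiftFst_apply, shiftSnd_apply]
  split_ifs <;> simp_all

variable (K p)

def xOp : Module.End K (ℕ × ℕ → K) := shiftFst K p 1

/-- Left multiplication by `y` on the basis `x^a y^b`, from
`y x^(a-1) y^b = x^(a-1) y^(b+1) - ((a-1)/2) x^a y^b`. -/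
def yOp : Module.End K (ℕ × ℕ → K) := shiftSnd K p + shiftFst K p fun a => (1 - a) / 2

theorem yOp_mul_xOp : yOp K p * xOp K p = xOp K p * yOp K p - (1 / 2 : K) • xOp K p ^ 2 := by
  ext f ⟨a, b⟩
  simp only [xOp, yOp, sq, Module.End.mul_apply, LinearMap.add_apply, LinearMap.sub_apply,
    LinearMap.smul_apply, Pi.add_apply, Pi.sub_apply, Pi.smul_apply, smul_eq_mul, shiftFst_apply,
    shiftSnd_apply, Pi.one_apply]
  rcases a with _ | _ | a <;> split_ifs <;> first | omega | (push_cast; ring)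

theorem xOp_pow_self [NeZero p] : xOp K p ^ p = 0 := shiftFst_pow_self (NeZero.pos p) 1

theorem yOp_pow_self [Fact p.Prime] [CharP K p] : yOp K p ^ p = 0 := by
  have := charP_of_injective_algebraMap' K (A := Module.End K (ℕ × ℕ → K)) p
  rw [yOp, add_pow_char_of_commute (p := p) (commute_shiftSnd_shiftFst _),
    shiftSnd_pow_self (NeZero.pos p), shiftFst_pow_self (NeZero.pos p), add_zero]

theorem xOp_single {i : ℕ} (hi : i + 1 < p) (j : ℕ) :
    xOp K p (Pi.single (i, j) 1) = Pi.single (i + 1, j) 1 := by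
  ext ⟨a, b⟩
  simp only [xOp, shiftFst_apply, Pi.single_apply, Prod.mk.injEq, Pi.one_apply]
  split_ifs <;> first | omega | simp

theorem yOp_single {j : ℕ} (hj : j + 1 < p) :
    yOp K p (Pi.single (0, j) 1) = Pi.single (0, j + 1) 1 := by
  ext ⟨a, b⟩
  simp only [yOp, LinearMap.add_apply, Pi.add_apply, shiftFst_apply, shiftSnd_apply,
    Pi.single_apply, Prod.mk.injEq]
  rcases a with _ | _ | a <;> split_ifs <;> first | omega | simp_all

theorem xOp_pow_single {i : ℕ} (hi : i < p) (j : ℕ) :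
    (xOp K p ^ i) (Pi.single (0, j) 1) = Pi.single (i, j) 1 := by
  induction i with
  | zero => rfl
  | succ i ih => rw [pow_succ', Module.End.mul_apply, ih (by omega), xOp_single K p hi]

theorem yOp_pow_single {j : ℕ} (hj : j < p) :
    (yOp K p ^ j) (Pi.single (0, 0) 1) = Pi.single (0, j) 1 := by
  induction j with
  | zero => rfl
  | succ j ih => rw [pow_succ', Module.End.mul_apply, ih (by omega), yOp_single K p hj]

end Operators

section Quotient

variable (K : Type*) [Field K] (p : ℕ)

abbrev x : RingQuot (JRel K p) := RingQuot.mkAlgHom K (JRel K p) (FreeAlgebra.ι K 0)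

abbrev y : RingQuot (JRel K p) := RingQuot.mkAlgHom K (JRel K p) (FreeAlgebra.ι K 1)

theorem x_pow_self : x K p ^ p = 0 := by
  rw [← map_pow, RingQuot.mkAlgHom_rel K JRel.xp, map_zero]

theorem y_pow_self : y K p ^ p = 0 := by
  rw [← map_pow, RingQuot.mkAlgHom_rel K JRel.yp, map_zero]

theorem y_mul_x : y K p * x K p = x K p * y K p - (1 / 2 : K) • x K p ^ 2 := by
  simpa using RingQuot.mkAlgHom_rel K (JRel.comm (K := K) (p := p))

theorem adjoin_x_y : Algebra.adjoin K {x K p, y K p} = ⊤ := by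
  have hrange : Set.range (FreeAlgebra.ι K : Fin 2 → FreeAlgebra K (Fin 2)) =
      {FreeAlgebra.ι K 0, FreeAlgebra.ι K 1} := by
    ext; simp [Fin.exists_fin_two, eq_comm]
  rw [← (AlgHom.range_eq_top _).mpr (RingQuot.mkAlgHom_surjective K (JRel K p)),
    ← Algebra.map_top, ← FreeAlgebra.adjoin_range_ι, AlgHom.map_adjoin, hrange, Set.image_pair]

variable [Fact p.Prime] [CharP K p]

noncomputable def rep : RingQuot (JRel K p) →ₐ[K] Module.End K (ℕ × ℕ → K) :=
  RingQuot.liftAlgHom K ⟨FreeAlgebra.lift K ![xOp K p, yOp K p], by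
    rintro _ _ (_ | _ | _) <;> simp [xOp_pow_self, yOp_pow_self, yOp_mul_xOp]⟩

theorem rep_x : rep K p (x K p) = xOp K p := by simp [rep]

theorem rep_y : rep K p (y K p) = yOp K p := by simp [rep]

theorem rep_x_pow_mul_y_pow_single (i j : Fin p) :
    rep K p (x K p ^ (i : ℕ) * y K p ^ (j : ℕ)) (Pi.single (0, 0) 1) =
      Pi.single ((i : ℕ), (j : ℕ)) 1 := by
  rw [map_mul, map_pow, map_pow, rep_x, rep_y, Module.End.mul_apply, yOp_pow_single K p j.isLt,
    xOp_pow_single K p i.isLt]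

theorem linearIndependent_x_pow_mul_y_pow :
    LinearIndependent K fun ij : Fin p × Fin p => x K p ^ (ij.1 : ℕ) * y K p ^ (ij.2 : ℕ) := by
  refine .of_comp ((LinearMap.applyₗ (Pi.single (0, 0) 1)).comp (rep K p).toLinearMap) ?_
  convert (Pi.linearIndependent_single_one (ℕ × ℕ) K).comp (Prod.map Fin.val Fin.val)
    (Fin.val_injective.prodMap Fin.val_injective) using 1
  ext1 ij
  exact rep_x_pow_mul_y_pow_single K p ij.1 ij.2

end Quotient
end RestrictedJordanPlane

open RestrictedJordanPlane

theorem stmt5 (K : Type*) [Field K] (p : ℕ) [Fact p.Prime] [CharP K p] :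
    (∃ b : Module.Basis (Fin p × Fin p) K (RingQuot (JRel K p)),
      ∀ ij : Fin p × Fin p, b ij =
        (RingQuot.mkAlgHom K (JRel K p) (FreeAlgebra.ι K (0 : Fin 2))) ^ (ij.1 : ℕ) *
        (RingQuot.mkAlgHom K (JRel K p) (FreeAlgebra.ι K (1 : Fin 2))) ^ (ij.2 : ℕ)) ∧
    Module.finrank K (RingQuot (JRel K p)) = p ^ 2 := by
  let b := Module.Basis.mk (linearIndependent_x_pow_mul_y_pow K p)
    (span_pow_mul_pow_eq_top (x_pow_self K p) (y_pow_self K p) (y_mul_x K p) (adjoin_x_y K p)).ge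
  refine ⟨⟨b, Module.Basis.mk_apply _ _⟩, ?_⟩
  rw [Module.finrank_eq_card_basis b, Fintype.card_prod, Fintype.card_fin, sq]
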